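/- arXiv:1905.12879 — 4 statements merged into one kernel-verified Lean document; each statement's English description precedes it below -/
import Mathlib

section
/- Let Z ∈ ℝ^{d×d} be symmetric positive definite, let D > 0 and B_D = {θ ∈ ℝ^d : ‖θ‖ ≤ D}, let g ∈ ℝ^d, let θ̂ ∈ ℝ^d, and let θ̂⁺ be the minimizer over θ ∈ B_D of (1/2)·‖θ - θ̂‖_Z² + θᵀg (equivalently, θ̂⁺ is the Z-generalized projection of θ̂ - Z⁻¹g onto B_D). Then for every θ ∈ B_D, gᵀ(θ̂ - θ) - (1/2)·gᵀZ⁻¹g ≤ (1/2)·(‖θ̂ - θ‖_Z² - ‖θ̂⁺ - θ‖_Z²). -/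
/-!
Since `θ̂⁺` minimizes a convex quadratic over the convex ball, first-order optimality gives
`⟨Z(θ̂⁺ - θ̂) + g, θ - θ̂⁺⟩ ≥ 0` for every `θ` in the ball. Writing `g = Z u` with `u = Z⁻¹g`,
completing the square shows that the gap between the two sides of the inequality is exactly this
quantity plus `½‖θ̂ - θ̂⁺ - u‖_Z²`, so it is nonnegative.
-/

open Matrix Filter Topology Set

lemma nonneg_of_forall_mul_add_sq_mul_nonneg {A B : ℝ}
    (h : ∀ t ∈ Ioc (0 : ℝ) 1, 0 ≤ t * A + t ^ 2 * B) : 0 ≤ A := by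
  have hlim : Tendsto (fun t : ℝ => A + t * B) (𝓝[>] 0) (𝓝 A) := by
    simpa using (((continuous_mul_const B).tendsto 0).const_add A).mono_left nhdsWithin_le_nhds
  refine ge_of_tendsto hlim ?_
  filter_upwards [Ioc_mem_nhdsGT zero_lt_one] with t ht
  have := h t ht
  exact (mul_nonneg_iff_of_pos_left ht.1).mp (by linarith)

lemma convex_setOf_sqrt_sum_sq_le {n : Type*} [Fintype n] (D : ℝ) :
    Convex ℝ {θ : n → ℝ | √(∑ i, θ i ^ 2) ≤ D} := by
  have hball : {θ : n → ℝ | √(∑ i, θ i ^ 2) ≤ D} =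
      (WithLp.linearEquiv 2 ℝ (n → ℝ)).symm ⁻¹' Metric.closedBall 0 D := by
    ext θ
    simp [EuclideanSpace.norm_eq]
  rw [hball]
  exact (convex_closedBall _ _).linear_preimage (WithLp.linearEquiv 2 ℝ (n → ℝ)).symm.toLinearMap

namespace Matrix

variable {n : Type*} [Fintype n]

lemma IsSymm.dotProduct_mulVec_comm {R : Type*} [CommSemiring R] {Z : Matrix n n R}
    (hZ : Z.IsSymm) (x y : n → R) : x ⬝ᵥ Z *ᵥ y = y ⬝ᵥ Z *ᵥ x := by
  rw [dotProduct_mulVec, ← mulVec_transpose, hZ.eq, dotProduct_comm]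

variable {Z : Matrix n n ℝ}

lemma IsSymm.add_dotProduct_mulVec_add (hZ : Z.IsSymm) (x y : n → ℝ) :
    (x + y) ⬝ᵥ Z *ᵥ (x + y) = x ⬝ᵥ Z *ᵥ x + 2 * (x ⬝ᵥ Z *ᵥ y) + y ⬝ᵥ Z *ᵥ y := by
  simp only [mulVec_add, dotProduct_add, add_dotProduct, hZ.dotProduct_mulVec_comm y x]
  ring

lemma IsSymm.three_point_identity (hZ : Z.IsSymm) (a p θ u : n → ℝ) :
    1 / 2 * ((a - θ) ⬝ᵥ Z *ᵥ (a - θ) - (p - θ) ⬝ᵥ Z *ᵥ (p - θ))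
      - (Z *ᵥ u) ⬝ᵥ (a - θ) + 1 / 2 * ((Z *ᵥ u) ⬝ᵥ u) =
      1 / 2 * ((a - p - u) ⬝ᵥ Z *ᵥ (a - p - u)) + (Z *ᵥ (p - a) + Z *ᵥ u) ⬝ᵥ (θ - p) := by
  have hc := hZ.dotProduct_mulVec_comm
  simp only [mulVec_sub, dotProduct_sub, sub_dotProduct, add_dotProduct,
    dotProduct_comm (Z *ᵥ _)]
  rw [hc θ a, hc θ p, hc u a, hc u p, hc p a]
  ring

lemma IsSymm.gradient_dotProduct_sub_nonneg_of_isMinOn (hZ : Z.IsSymm) {K : Set (n → ℝ)}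
    (hK : Convex ℝ K) {a g p θ : n → ℝ} (hp : p ∈ K)
    (hmin : IsMinOn (fun θ => 1 / 2 * ((θ - a) ⬝ᵥ Z *ᵥ (θ - a)) + θ ⬝ᵥ g) K p) (hθ : θ ∈ K) :
    0 ≤ (Z *ᵥ (p - a) + g) ⬝ᵥ (θ - p) := by
  refine nonneg_of_forall_mul_add_sq_mul_nonneg (B := 1 / 2 * ((θ - p) ⬝ᵥ Z *ᵥ (θ - p)))
    fun t ht => ?_
  have hmem : p + t • (θ - p) ∈ K := by
    simpa using hK.add_smul_sub_mem hp hθ ⟨ht.1.le, ht.2⟩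
  have := isMinOn_iff.mp hmin _ hmem
  rw [add_sub_right_comm, hZ.add_dotProduct_mulVec_add] at this
  simp only [mulVec_smul, dotProduct_smul, smul_dotProduct, add_dotProduct, smul_eq_mul] at this
  rw [add_dotProduct, dotProduct_comm (Z *ᵥ (p - a)), dotProduct_comm g,
    hZ.dotProduct_mulVec_comm (θ - p)]
  linarith

end Matrix

theorem online_newton_step_inequality_general
    {d : ℕ} (Z : Matrix (Fin d) (Fin d) ℝ) (hZ : Z.PosDef)
    (D : ℝ) (g θhat θhatPlus : Fin d → ℝ)
    (h_mem : Real.sqrt (∑ i, θhatPlus i ^ 2) ≤ D)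
    (h_min : ∀ θ : Fin d → ℝ, Real.sqrt (∑ i, θ i ^ 2) ≤ D →
      1 / 2 * ((θhatPlus - θhat) ⬝ᵥ (Z *ᵥ (θhatPlus - θhat))) + θhatPlus ⬝ᵥ g ≤
        1 / 2 * ((θ - θhat) ⬝ᵥ (Z *ᵥ (θ - θhat))) + θ ⬝ᵥ g) :
    ∀ θ : Fin d → ℝ, Real.sqrt (∑ i, θ i ^ 2) ≤ D →
      g ⬝ᵥ (θhat - θ) - 1 / 2 * (g ⬝ᵥ (Z⁻¹ *ᵥ g)) ≤
        1 / 2 * ((θhat - θ) ⬝ᵥ (Z *ᵥ (θhat - θ))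
          - (θhatPlus - θ) ⬝ᵥ (Z *ᵥ (θhatPlus - θ))) := by
  intro θ hθ
  have hsymm : Z.IsSymm := isHermitian_iff_isSymm.mp hZ.1
  have hg : Z *ᵥ (Z⁻¹ *ᵥ g) = g := by
    rw [mulVec_mulVec, mul_nonsing_inv _ ((isUnit_iff_isUnit_det Z).mp hZ.isUnit), one_mulVec]
  have hopt := hsymm.gradient_dotProduct_sub_nonneg_of_isMinOn (convex_setOf_sqrt_sum_sq_le D)
    h_mem (isMinOn_iff.mpr h_min) hθ
  have hsq : 0 ≤ (θhat - θhatPlus - Z⁻¹ *ᵥ g) ⬝ᵥ Z *ᵥ (θhat - θhatPlus - Z⁻¹ *ᵥ g) := by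
    simpa only [star_trivial] using hZ.posSemidef.dotProduct_mulVec_nonneg _
  have hgap := hsymm.three_point_identity θhat θhatPlus θ (Z⁻¹ *ᵥ g)
  rw [hg] at hgap
  linarith

/-- Lemma 3 of the paper, online Newton step inequality.
If `θ̂⁺` minimizes `(1/2)·‖θ - θ̂‖_Z² + θᵀg` over the ball of radius `D`, then for
every `θ` in the ball, `gᵀ(θ̂ - θ) - (1/2)·gᵀZ⁻¹g ≤ (1/2)(‖θ̂ - θ‖_Z² - ‖θ̂⁺ - θ‖_Z²)`. -/
theorem online_newton_step_inequality
    {d : ℕ} (Z : Matrix (Fin d) (Fin d) ℝ) (hZ : Z.PosDef)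
    (D : ℝ) (hD : 0 < D) (g θhat θhatPlus : Fin d → ℝ)
    (h_mem : Real.sqrt (∑ i, θhatPlus i ^ 2) ≤ D)
    (h_min : ∀ θ : Fin d → ℝ, Real.sqrt (∑ i, θ i ^ 2) ≤ D →
      1 / 2 * ((θhatPlus - θhat) ⬝ᵥ (Z *ᵥ (θhatPlus - θhat))) + θhatPlus ⬝ᵥ g ≤
        1 / 2 * ((θ - θhat) ⬝ᵥ (Z *ᵥ (θ - θhat))) + θ ⬝ᵥ g) :
    ∀ θ : Fin d → ℝ, Real.sqrt (∑ i, θ i ^ 2) ≤ D →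
      g ⬝ᵥ (θhat - θ) - 1 / 2 * (g ⬝ᵥ (Z⁻¹ *ᵥ g)) ≤
        1 / 2 * ((θhat - θ) ⬝ᵥ (Z *ᵥ (θhat - θ))
          - (θhatPlus - θ) ⬝ᵥ (Z *ᵥ (θhatPlus - θ))) :=
  online_newton_step_inequality_general Z hZ D g θhat θhatPlus h_mem h_min
end

section
/- Let d ≥ 1, κ > 0, let Z_1 ∈ ℝ^{d×d} be symmetric positive definite, let x_1, …, x_t ∈ ℝ^d, and define Z_{s+1} = Z_s + (κ/2)·x_s x_sᵀ for s = 1, …, t. Then Σ_{s=1}^t x_sᵀ Z_{s+1}⁻¹ x_s ≤ (2/κ) · log(det(Z_{t+1}) / det(Z_1)). -/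
/-!
Applying the matrix determinant lemma to `Z s = Z (s + 1) - (κ / 2) • x s x sᵀ` gives
`(κ / 2) x sᵀ (Z (s + 1))⁻¹ x s = 1 - det (Z s) / det (Z (s + 1))`, and `1 - r ≤ -log r`.
Summing over `s`, the log-determinants telescope.
-/

namespace Matrix

theorem PosDef.of_sub_posSemidef_succ {n R : Type*} [Ring R] [PartialOrder R] [StarRing R]
    [AddLeftMono R] {Z : ℕ → Matrix n n R} {t : ℕ}
    (hZ1 : (Z 1).PosDef) (hZ : ∀ s ∈ Finset.Icc 1 t, (Z (s + 1) - Z s).PosSemidef) :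
    ∀ s ∈ Finset.Icc 1 (t + 1), (Z s).PosDef := by
  intro s hs
  rw [Finset.mem_Icc] at hs
  obtain ⟨hs1, hst⟩ := hs
  induction s, hs1 using Nat.le_induction with
  | base => exact hZ1
  | succ s hs1 ih =>
    rw [← add_sub_cancel (Z s) (Z (s + 1))]
    exact (ih (by omega)).add_posSemidef (hZ s (Finset.mem_Icc.mpr ⟨hs1, by omega⟩))

variable {n : Type*} [Fintype n] [DecidableEq n]

theorem det_add_smul_vecMulVec {α : Type*} [CommRing α] {A : Matrix n n α} (hA : IsUnit A.det)
    (c : α) (u v : n → α) :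
    (A + c • vecMulVec u v).det = A.det * (1 + c * (v ⬝ᵥ (A⁻¹ *ᵥ u))) := by
  rw [← smul_vecMulVec, vecMulVec_eq Unit, det_add_replicateCol_mul_replicateRow hA,
    det_unique (n := Unit), Matrix.mul_assoc, ← replicateCol_mulVec, add_apply,
    one_apply_eq, replicateRow_mul_replicateCol_apply, mulVec_smul, dotProduct_smul, smul_eq_mul]

theorem det_sub_smul_vecMulVec_div_det {K : Type*} [Field K] {B : Matrix n n K} (hB : B.det ≠ 0)
    (c : K) (u v : n → K) :
    (B - c • vecMulVec u v).det / B.det = 1 - c * (v ⬝ᵥ (B⁻¹ *ᵥ u)) := by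
  rw [sub_eq_add_neg, ← neg_smul, det_add_smul_vecMulVec hB.isUnit, mul_div_cancel_left₀ _ hB,
    neg_mul, ← sub_eq_add_neg]

theorem PosDef.mul_dotProduct_inv_add_smul_vecMulVec_le_log_det {A : Matrix n n ℝ} (hA : A.PosDef)
    {c : ℝ} (hc : 0 ≤ c) (v : n → ℝ) :
    c * (v ⬝ᵥ ((A + c • vecMulVec v v)⁻¹ *ᵥ v)) ≤
      Real.log (A + c • vecMulVec v v).det - Real.log A.det := by
  set B := A + c • vecMulVec v v
  have hB : B.PosDef := hA.add_posSemidef ((posSemidef_vecMulVec_self_star v).smul hc)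
  have hratio : A.det / B.det = 1 - c * (v ⬝ᵥ (B⁻¹ *ᵥ v)) := by
    simpa [B] using det_sub_smul_vecMulVec_div_det hB.det_pos.ne' c v v
  have hlog := Real.log_le_sub_one_of_pos (div_pos hA.det_pos hB.det_pos)
  rw [Real.log_div hA.det_pos.ne' hB.det_pos.ne', hratio] at hlog
  linarith

end Matrix

open Matrix

theorem elliptical_potential_updated_general
    (d : ℕ) (κ : ℝ) (hκ : 0 < κ) (t : ℕ)
    (x : ℕ → Fin d → ℝ) (Z : ℕ → Matrix (Fin d) (Fin d) ℝ)
    (hZ1 : (Z 1).PosDef)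
    (hZrec : ∀ s ∈ Finset.Icc 1 t, Z (s + 1) = Z s + (κ / 2) • vecMulVec (x s) (x s)) :
    ∑ s ∈ Finset.Icc 1 t, x s ⬝ᵥ ((Z (s + 1))⁻¹ *ᵥ x s) ≤
      2 / κ * Real.log ((Z (t + 1)).det / (Z 1).det) := by
  have hPD : ∀ s ∈ Finset.Icc 1 (t + 1), (Z s).PosDef := by
    refine PosDef.of_sub_posSemidef_succ hZ1 fun s hs ↦ ?_
    rw [hZrec s hs, add_sub_cancel_left]
    exact (posSemidef_vecMulVec_self_star (x s)).smul (by positivity)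
  have hstep : ∀ s ∈ Finset.Icc 1 t, x s ⬝ᵥ ((Z (s + 1))⁻¹ *ᵥ x s) ≤
      2 / κ * (Real.log (Z (s + 1)).det - Real.log (Z s).det) := by
    intro s hs
    have hPDs := hPD s (Finset.Icc_subset_Icc_right t.le_succ hs)
    calc x s ⬝ᵥ ((Z (s + 1))⁻¹ *ᵥ x s)
        = 2 / κ * (κ / 2 * (x s ⬝ᵥ ((Z (s + 1))⁻¹ *ᵥ x s))) := by field_simp
      _ ≤ 2 / κ * (Real.log (Z (s + 1)).det - Real.log (Z s).det) := by
        rw [hZrec s hs]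
        gcongr
        exact hPDs.mul_dotProduct_inv_add_smul_vecMulVec_le_log_det (by positivity) (x s)
  have hdet_ne (s) (hs : s ∈ Finset.Icc 1 (t + 1)) : (Z s).det ≠ 0 := (hPD s hs).det_pos.ne'
  calc ∑ s ∈ Finset.Icc 1 t, x s ⬝ᵥ ((Z (s + 1))⁻¹ *ᵥ x s)
      ≤ ∑ s ∈ Finset.Icc 1 t, 2 / κ * (Real.log (Z (s + 1)).det - Real.log (Z s).det) :=
        Finset.sum_le_sum hstep
    _ = 2 / κ * Real.log ((Z (t + 1)).det / (Z 1).det) := by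
        rw [← Finset.mul_sum, ← Finset.Ico_add_one_right_eq_Icc,
          Finset.sum_Ico_sub (fun s ↦ Real.log (Z s).det) (by omega),
          Real.log_div (hdet_ne (t + 1) (by simp)) (hdet_ne 1 (by simp))]

/-- elliptical potential bound with updated Gram matrices,
Lemma 12 of Hazan et al. 2007. -/
theorem elliptical_potential_updated
    (d : ℕ) (hd : 1 ≤ d) (κ : ℝ) (hκ : 0 < κ) (t : ℕ)
    (x : ℕ → Fin d → ℝ) (Z : ℕ → Matrix (Fin d) (Fin d) ℝ)
    (hZ1 : (Z 1).PosDef)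
    (hZrec : ∀ s ∈ Finset.Icc 1 t, Z (s + 1) = Z s + (κ / 2) • vecMulVec (x s) (x s)) :
    ∑ s ∈ Finset.Icc 1 t, x s ⬝ᵥ ((Z (s + 1))⁻¹ *ᵥ x s) ≤
      2 / κ * Real.log ((Z (t + 1)).det / (Z 1).det) :=
  elliptical_potential_updated_general d κ hκ t x Z hZ1 hZrec
end

section
/- Let d ≥ 1, κ > 0, λ ≥ max(1, κ/2), and let x_1, …, x_T ∈ ℝ^d with ‖x_t‖ ≤ 1 for every t. Define Z_1 = λ·I_d and Z_{t+1} = Z_t + (κ/2)·x_t x_tᵀ. Then Σ_{t=1}^T x_tᵀ Z_t⁻¹ x_t ≤ (4/κ) · log(det(Z_{T+1}) / det(Z_1)). -/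
/-!
Because `Z t ⪰ lam • 1` and `‖x t‖ ≤ 1`, the potential `u = x tᵀ (Z t)⁻¹ x t` is at most
`1 / lam`, so `s = (κ / 2) u ≤ 1`. The matrix determinant lemma gives
`det Z (t + 1) = det Z t * (1 + s)`, and `s ≤ 2 log (1 + s)` on `[0, 1]`; summing over `t`,
the log-determinants telescope.
-/

open Matrix

theorem Real.half_le_log_one_add {s : ℝ} (h0 : 0 ≤ s) (h1 : s ≤ 1) :
    s / 2 ≤ Real.log (1 + s) := by
  have hpos : 0 < 1 + s := by linarith
  calc s / 2 ≤ s / (1 + s) := div_le_div_of_nonneg_left h0 hpos (by linarith)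
    _ = 1 - (1 + s)⁻¹ := by field_simp; ring
    _ ≤ Real.log (1 + s) := Real.one_sub_inv_le_log_of_pos hpos

namespace Matrix

variable {n : Type*}

theorem det_add_vecMulVec [Fintype n] [DecidableEq n] {R : Type*} [CommRing R]
    {A : Matrix n n R} (hA : IsUnit A.det) (u v : n → R) :
    (A + vecMulVec u v).det = A.det * (1 + v ⬝ᵥ A⁻¹ *ᵥ u) := by
  rw [vecMulVec_eq Unit, det_add_replicateCol_mul_replicateRow hA, Matrix.mul_assoc,
    ← replicateCol_mulVec, det_unique (1 + _)]
  simp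

theorem posSemidef_sub_of_forall_Icc_sub_succ {R : Type*} [Ring R] [PartialOrder R] [StarRing R]
    [AddLeftMono R] {Z : ℕ → Matrix n n R} {a b : ℕ}
    (h : ∀ t ∈ Finset.Icc a b, (Z (t + 1) - Z t).PosSemidef) :
    ∀ t ∈ Finset.Icc a (b + 1), (Z t - Z a).PosSemidef := by
  intro t ht
  rw [Finset.mem_Icc] at ht
  induction t, ht.1 using Nat.le_induction with
  | base => simpa using PosSemidef.zero
  | succ t hat ih =>
    rw [← sub_add_sub_cancel _ (Z t)]
    exact (h t (Finset.mem_Icc.2 ⟨hat, by omega⟩)).add (ih ⟨hat, by omega⟩)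

theorem posDef_of_posSemidef_sub_smul_one [Finite n] [DecidableEq n] {A : Matrix n n ℝ} {c : ℝ}
    (hc : 0 < c) (hA : (A - c • 1).PosSemidef) : A.PosDef := by
  simpa using (PosDef.one.smul hc).add_posSemidef hA

theorem dotProduct_inv_mulVec_le [Fintype n] [DecidableEq n] {A : Matrix n n ℝ} {c : ℝ}
    (hc : 0 < c) (hA : (A - c • 1).PosSemidef) (x : n → ℝ) :
    x ⬝ᵥ A⁻¹ *ᵥ x ≤ (x ⬝ᵥ x) / c := by
  have hA' := posDef_of_posSemidef_sub_smul_one hc hA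
  set y := A⁻¹ *ᵥ x
  have hAy : A *ᵥ y = x := by
    rw [mulVec_mulVec, mul_nonsing_inv _ (isUnit_iff_ne_zero.2 hA'.det_pos.ne'), one_mulVec]
  have hu : 0 ≤ x ⬝ᵥ y := by simpa using hA'.inv.posSemidef.dotProduct_mulVec_nonneg x
  have hlow : c * (y ⬝ᵥ y) ≤ x ⬝ᵥ y := by
    have := hA.dotProduct_mulVec_nonneg y
    simp only [star_trivial, sub_mulVec, smul_mulVec, one_mulVec, dotProduct_sub,
      dotProduct_smul, smul_eq_mul, sub_nonneg, hAy] at this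
    exact this.trans_eq (dotProduct_comm y x)
  have hcs : (x ⬝ᵥ y) ^ 2 ≤ (x ⬝ᵥ x) * (y ⬝ᵥ y) := by
    simpa [dotProduct, sq] using Finset.sum_mul_sq_le_sq_mul_sq Finset.univ x y
  rw [le_div_iff₀ hc]
  rcases hu.eq_or_lt with hu0 | hu0
  · rw [← hu0, zero_mul]
    exact dotProduct_self_star_nonneg x
  · refine le_of_mul_le_mul_right ?_ hu0
    calc x ⬝ᵥ y * c * (x ⬝ᵥ y) = c * (x ⬝ᵥ y) ^ 2 := by ring
      _ ≤ c * ((x ⬝ᵥ x) * (y ⬝ᵥ y)) := by gcongr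
      _ = (x ⬝ᵥ x) * (c * (y ⬝ᵥ y)) := by ring
      _ ≤ (x ⬝ᵥ x) * (x ⬝ᵥ y) := by gcongr; exact dotProduct_self_star_nonneg x

theorem dotProduct_inv_mulVec_le_log_det_add [Fintype n] [DecidableEq n] {A : Matrix n n ℝ}
    {c lam : ℝ} (hc : 0 < c) (hcl : c ≤ lam) (hA : (A - lam • 1).PosSemidef) {x : n → ℝ}
    (hx : x ⬝ᵥ x ≤ 1) :
    x ⬝ᵥ A⁻¹ *ᵥ x ≤ 2 / c * (Real.log (A + c • vecMulVec x x).det - Real.log A.det) := by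
  have hlam : 0 < lam := hc.trans_le hcl
  have hA' := posDef_of_posSemidef_sub_smul_one hlam hA
  set u := x ⬝ᵥ A⁻¹ *ᵥ x
  have hu0 : 0 ≤ u := by simpa using hA'.inv.posSemidef.dotProduct_mulVec_nonneg x
  have hu1 : c * u ≤ 1 := by
    have : u ≤ 1 / lam := (dotProduct_inv_mulVec_le hlam hA x).trans (by gcongr)
    calc c * u ≤ lam * (1 / lam) := by gcongr
      _ = 1 := by field_simp
  have hdet : (A + c • vecMulVec x x).det = A.det * (1 + c * u) := by
    rw [← smul_vecMulVec, det_add_vecMulVec (isUnit_iff_ne_zero.2 hA'.det_pos.ne'),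
      mulVec_smul, dotProduct_smul, smul_eq_mul]
  rw [hdet, Real.log_mul hA'.det_pos.ne' (by positivity), add_sub_cancel_left]
  calc u = 2 / c * (c * u / 2) := by field_simp
    _ ≤ 2 / c * Real.log (1 + c * u) := by
      gcongr
      exact Real.half_le_log_one_add (by positivity) hu1

end Matrix

theorem elliptical_potential_preupdate_general
    (d : ℕ) (κ lam : ℝ) (hκ : 0 < κ) (hlam : max 1 (κ / 2) ≤ lam)
    (T : ℕ) (x : ℕ → Fin d → ℝ)
    (hx : ∀ t ∈ Finset.Icc 1 T, Real.sqrt (∑ j, x t j ^ 2) ≤ 1)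
    (Z : ℕ → Matrix (Fin d) (Fin d) ℝ)
    (hZ1 : Z 1 = lam • (1 : Matrix (Fin d) (Fin d) ℝ))
    (hZrec : ∀ t ∈ Finset.Icc 1 T, Z (t + 1) = Z t + (κ / 2) • vecMulVec (x t) (x t)) :
    ∑ t ∈ Finset.Icc 1 T, x t ⬝ᵥ ((Z t)⁻¹ *ᵥ x t) ≤
      4 / κ * Real.log ((Z (T + 1)).det / (Z 1).det) := by
  have hc : 0 < κ / 2 := by positivity
  have hcl : κ / 2 ≤ lam := le_of_max_le_right hlam
  have hgap : ∀ t ∈ Finset.Icc 1 (T + 1), (Z t - lam • 1).PosSemidef := by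
    rw [← hZ1]
    refine posSemidef_sub_of_forall_Icc_sub_succ fun t ht => ?_
    rw [hZrec t ht, add_sub_cancel_left]
    exact (posSemidef_vecMulVec_self_star (x t)).smul hc.le
  have hstep : ∀ t ∈ Finset.Icc 1 T, x t ⬝ᵥ (Z t)⁻¹ *ᵥ x t ≤
      4 / κ * (Real.log (Z (t + 1)).det - Real.log (Z t).det) := by
    intro t ht
    have hxt : x t ⬝ᵥ x t ≤ 1 := by simpa [dotProduct, sq] using hx t ht
    have hgapt := hgap t (Finset.Icc_subset_Icc_right (Nat.le_succ T) ht)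
    rw [hZrec t ht, show 4 / κ = 2 / (κ / 2) by ring]
    exact dotProduct_inv_mulVec_le_log_det_add hc hcl hgapt hxt
  have hdet : ∀ t ∈ Finset.Icc 1 (T + 1), (Z t).det ≠ 0 := fun t ht =>
    (posDef_of_posSemidef_sub_smul_one (hc.trans_le hcl) (hgap t ht)).det_pos.ne'
  calc ∑ t ∈ Finset.Icc 1 T, x t ⬝ᵥ (Z t)⁻¹ *ᵥ x t
      ≤ ∑ t ∈ Finset.Icc 1 T, 4 / κ * (Real.log (Z (t + 1)).det - Real.log (Z t).det) :=
        Finset.sum_le_sum hstep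
    _ = 4 / κ * Real.log ((Z (T + 1)).det / (Z 1).det) := by
      rw [← Finset.mul_sum, ← Finset.Ico_add_one_right_eq_Icc,
        Finset.sum_Ico_sub (fun t => Real.log (Z t).det) (by omega),
        Real.log_div (hdet _ (by simp)) (hdet _ (by simp))]

/-- elliptical potential bound with pre-update Gram matrices,
Lemma 11 of Abbasi-Yadkori et al. 2011, adapted. -/
theorem elliptical_potential_preupdate
    (d : ℕ) (hd : 1 ≤ d) (κ lam : ℝ) (hκ : 0 < κ) (hlam : max 1 (κ / 2) ≤ lam)
    (T : ℕ) (x : ℕ → Fin d → ℝ)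
    (hx : ∀ t ∈ Finset.Icc 1 T, Real.sqrt (∑ j, x t j ^ 2) ≤ 1)
    (Z : ℕ → Matrix (Fin d) (Fin d) ℝ)
    (hZ1 : Z 1 = lam • (1 : Matrix (Fin d) (Fin d) ℝ))
    (hZrec : ∀ t ∈ Finset.Icc 1 T, Z (t + 1) = Z t + (κ / 2) • vecMulVec (x t) (x t)) :
    ∑ t ∈ Finset.Icc 1 T, x t ⬝ᵥ ((Z t)⁻¹ *ᵥ x t) ≤
      4 / κ * Real.log ((Z (T + 1)).det / (Z 1).det) :=
  elliptical_potential_preupdate_general d κ lam hκ hlam T x hx Z hZ1 hZrec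
end

section
/- Let d, m ≥ 1, D > 0, L > 0, γ ≥ 0, let X ⊆ {x ∈ ℝ^d : ‖x‖ ≤ 1} be a finite nonempty arm set, let Z ∈ ℝ^{d×d} be symmetric positive definite, and for each i ∈ {1,…,m} let μ_i : [-D, D] → ℝ be monotonically increasing and L-Lipschitz, let θ_i ∈ ℝ^d with ‖θ_i‖ ≤ D, and let θ̂_i ∈ ℝ^d satisfy ‖θ_i - θ̂_i‖_Z² ≤ γ. Define the expected reward μ_x = (μ_1(θ_1ᵀx), …, μ_m(θ_mᵀx)) for x ∈ X. Suppose x_t ∈ X is empirically Pareto optimal with respect to the UCB indices, i.e., for every x ∈ X there exists j ∈ {1,…,m} with θ̂_jᵀx_t + √γ·‖x_t‖_{Z⁻¹} ≥ θ̂_jᵀx + √γ·‖x‖_{Z⁻¹}. Then the Pareto suboptimality gap of x_t satisfies Δx_t ≤ 2L·√γ·‖x_t‖_{Z⁻¹}. -/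
open Matrix

/-- `v` is not dominated by `u` in the Pareto order: `v = u` or `v` strictly exceeds
`u` in some component. -/
def NotDominated {m : ℕ} (v u : Fin m → ℝ) : Prop :=
  v = u ∨ ∃ i, u i < v i

/-- The Pareto suboptimality gap of arm `x` with respect to arm set `X` and expected
reward map `μv`. -/
noncomputable def paretoGap {m : ℕ} {A : Type*} (X : Set A) (μv : A → Fin m → ℝ)
    (x : A) : ℝ :=
  sInf {ε : ℝ | 0 ≤ ε ∧ ∀ x' ∈ X, NotDominated (fun i => μv x i + ε) (μv x')}

/-! Validity of the confidence ellipsoid and Cauchy–Schwarz in the geometry of `Z` bound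
`|(θ_j - θ̂_j)ᵀx|` by `√γ‖x‖_{Z⁻¹}`. Against any competitor `x`, empirical Pareto optimality
of `x_t` yields an objective `j` whose UCB index at `x` is at most the one at `x_t`, whence
`θ_jᵀx ≤ θ_jᵀx_t + 2√γ‖x_t‖_{Z⁻¹}`. Monotonicity and the Lipschitz bound of `μ_j` turn this
into `μ_j(θ_jᵀx) ≤ μ_j(θ_jᵀx_t) + 2L√γ‖x_t‖_{Z⁻¹}`, so raising `μ_{x_t}` by any larger `ε`
leaves it undominated by `μ_x`. -/

lemma Matrix.PosDef.sq_dotProduct_le {n : Type*} [Fintype n] [DecidableEq n]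
    {Z : Matrix n n ℝ} (hZ : Z.PosDef) (u x : n → ℝ) :
    (u ⬝ᵥ x) ^ 2 ≤ (u ⬝ᵥ (Z *ᵥ u)) * (x ⬝ᵥ (Z⁻¹ *ᵥ x)) := by
  have hcancel : Z *ᵥ (Z⁻¹ *ᵥ x) = x := by
    rw [mulVec_mulVec, mul_nonsing_inv Z (isUnit_iff_ne_zero.2 hZ.det_pos.ne'), one_mulVec]
  have hsymm : (Z⁻¹ *ᵥ x) ⬝ᵥ (Z *ᵥ u) = u ⬝ᵥ (Z *ᵥ (Z⁻¹ *ᵥ x)) := by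
    have hZt : Zᵀ = Z := hZ.isHermitian
    rw [dotProduct_mulVec, ← mulVec_transpose, hZt, dotProduct_comm]
  -- Cauchy–Schwarz for the form `(v, w) ↦ v ⬝ᵥ Z w`, evaluated at `u` and `Z⁻¹ x`
  have hcs := LinearMap.BilinForm.apply_mul_apply_le_of_forall_zero_le (toLinearMap₂' ℝ Z)
    (fun v => by simpa [toLinearMap₂'_apply'] using hZ.posSemidef.dotProduct_mulVec_nonneg v)
    u (Z⁻¹ *ᵥ x)
  simp only [toLinearMap₂'_apply'] at hcs
  rwa [hsymm, hcancel, ← sq, dotProduct_comm (Z⁻¹ *ᵥ x)] at hcs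

lemma Matrix.PosDef.abs_dotProduct_le {n : Type*} [Fintype n] [DecidableEq n]
    {Z : Matrix n n ℝ} (hZ : Z.PosDef) (u x : n → ℝ) :
    |u ⬝ᵥ x| ≤ √(u ⬝ᵥ (Z *ᵥ u)) * √(x ⬝ᵥ (Z⁻¹ *ᵥ x)) := by
  have hu : 0 ≤ u ⬝ᵥ (Z *ᵥ u) := by simpa using hZ.posSemidef.dotProduct_mulVec_nonneg u
  rw [← Real.sqrt_sq_eq_abs, ← Real.sqrt_mul hu]
  exact Real.sqrt_le_sqrt (hZ.sq_dotProduct_le u x)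

lemma abs_dotProduct_le_sqrt_mul_sqrt {ι : Type*} [Fintype ι] (u v : ι → ℝ) :
    |u ⬝ᵥ v| ≤ √(∑ i, u i ^ 2) * √(∑ i, v i ^ 2) := by
  rw [← Real.sqrt_sq_eq_abs, ← Real.sqrt_mul (by positivity)]
  exact Real.sqrt_le_sqrt (Finset.sum_mul_sq_le_sq_mul_sq _ u v)

lemma MonotoneOn.le_add_mul_of_le_add {f : ℝ → ℝ} {s : Set ℝ} {L δ a b : ℝ}
    (hf : MonotoneOn f s) (hlip : ∀ z ∈ s, ∀ z' ∈ s, |f z - f z'| ≤ L * |z - z'|)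
    (hL : 0 ≤ L) (hδ : 0 ≤ δ) (ha : a ∈ s) (hb : b ∈ s) (hab : a ≤ b + δ) :
    f a ≤ f b + L * δ := by
  rcases le_or_gt a b with hle | hlt
  · linarith [hf ha hb hle, mul_nonneg hL hδ]
  · calc f a ≤ f b + |f a - f b| := by linarith [le_abs_self (f a - f b)]
      _ ≤ f b + L * |a - b| := by gcongr; exact hlip a ha b hb
      _ = f b + L * (a - b) := by rw [abs_of_pos (sub_pos.2 hlt)]
      _ ≤ f b + L * δ := by gcongr; linarith

lemma paretoGap_le_of_forall_exists_le {m : ℕ} {A : Type*} {X : Set A}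
    {μv : A → Fin m → ℝ} {x : A} {β : ℝ} (hβ : 0 ≤ β)
    (h : ∀ x' ∈ X, ∃ i, μv x' i ≤ μv x i + β) : paretoGap X μv x ≤ β := by
  refine le_of_forall_gt_imp_ge_of_dense fun ε hε =>
    csInf_le ⟨0, fun _ hy => hy.1⟩ ⟨hβ.trans hε.le, fun x' hx' => ?_⟩
  obtain ⟨i, hi⟩ := h x' hx'
  exact Or.inr ⟨i, by linarith⟩

theorem per_round_pareto_gap_bound_general
    (d m : ℕ)
    (D L γ : ℝ) (hL : 0 < L)
    (X : Finset (Fin d → ℝ))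
    (hXnorm : ∀ x ∈ X, Real.sqrt (∑ j, x j ^ 2) ≤ 1)
    (Z : Matrix (Fin d) (Fin d) ℝ) (hZ : Z.PosDef)
    (μ : Fin m → ℝ → ℝ)
    (hμ_mono : ∀ i, MonotoneOn (μ i) (Set.Icc (-D) D))
    (hμ_lip : ∀ i, ∀ z ∈ Set.Icc (-D) D, ∀ z' ∈ Set.Icc (-D) D,
      |μ i z - μ i z'| ≤ L * |z - z'|)
    (θ θhat : Fin m → Fin d → ℝ)
    (hθ : ∀ i, Real.sqrt (∑ j, θ i j ^ 2) ≤ D)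
    (hconf : ∀ i, (θ i - θhat i) ⬝ᵥ (Z *ᵥ (θ i - θhat i)) ≤ γ)
    (xt : Fin d → ℝ) (hxt : xt ∈ X)
    (hPareto : ∀ x ∈ X, ∃ j : Fin m,
      θhat j ⬝ᵥ x + Real.sqrt γ * Real.sqrt (x ⬝ᵥ (Z⁻¹ *ᵥ x)) ≤
        θhat j ⬝ᵥ xt + Real.sqrt γ * Real.sqrt (xt ⬝ᵥ (Z⁻¹ *ᵥ xt))) :
    paretoGap (X : Set (Fin d → ℝ)) (fun x i => μ i (θ i ⬝ᵥ x)) xt ≤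
      2 * L * Real.sqrt γ * Real.sqrt (xt ⬝ᵥ (Z⁻¹ *ᵥ xt)) := by
  set w : (Fin d → ℝ) → ℝ := fun x => √γ * √(x ⬝ᵥ (Z⁻¹ *ᵥ x))
  have hwidth (i : Fin m) (x : Fin d → ℝ) : |θ i ⬝ᵥ x - θhat i ⬝ᵥ x| ≤ w x := by
    rw [← sub_dotProduct]
    exact (hZ.abs_dotProduct_le _ x).trans <|
      mul_le_mul_of_nonneg_right (Real.sqrt_le_sqrt (hconf i)) (Real.sqrt_nonneg _)
  have hrange (i : Fin m) (x : Fin d → ℝ) (hx : x ∈ X) : θ i ⬝ᵥ x ∈ Set.Icc (-D) D :=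
    abs_le.1 <| (abs_dotProduct_le_sqrt_mul_sqrt _ _).trans <|
      (mul_le_of_le_one_right (Real.sqrt_nonneg _) (hXnorm x hx)).trans (hθ i)
  refine paretoGap_le_of_forall_exists_le (by positivity) fun x hx => ?_
  obtain ⟨j, hj⟩ := hPareto x hx
  have hshift : θ j ⬝ᵥ x ≤ θ j ⬝ᵥ xt + 2 * w xt := by
    linarith [(abs_le.1 (hwidth j x)).2, (abs_le.1 (hwidth j xt)).1]
  refine ⟨j, ?_⟩
  calc μ j (θ j ⬝ᵥ x) ≤ μ j (θ j ⬝ᵥ xt) + L * (2 * w xt) :=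
        (hμ_mono j).le_add_mul_of_le_add (hμ_lip j) hL.le (by positivity)
          (hrange j x hx) (hrange j xt hxt) hshift
    _ = μ j (θ j ⬝ᵥ xt) + 2 * L * √γ * √(xt ⬝ᵥ (Z⁻¹ *ᵥ xt)) := by ring

/-- per-round Pareto suboptimality gap bound, core of the proof of
Theorem 2: if `x_t` is empirically Pareto optimal with respect to the UCB indices
and all confidence sets are valid, then `Δx_t ≤ 2L·√γ·‖x_t‖_{Z⁻¹}`. -/
theorem per_round_pareto_gap_bound
    (d m : ℕ) (hd : 1 ≤ d) (hm : 1 ≤ m)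
    (D L γ : ℝ) (hD : 0 < D) (hL : 0 < L) (hγ : 0 ≤ γ)
    (X : Finset (Fin d → ℝ)) (hXne : X.Nonempty)
    (hXnorm : ∀ x ∈ X, Real.sqrt (∑ j, x j ^ 2) ≤ 1)
    (Z : Matrix (Fin d) (Fin d) ℝ) (hZ : Z.PosDef)
    (μ : Fin m → ℝ → ℝ)
    (hμ_mono : ∀ i, MonotoneOn (μ i) (Set.Icc (-D) D))
    (hμ_lip : ∀ i, ∀ z ∈ Set.Icc (-D) D, ∀ z' ∈ Set.Icc (-D) D,
      |μ i z - μ i z'| ≤ L * |z - z'|)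
    (θ θhat : Fin m → Fin d → ℝ)
    (hθ : ∀ i, Real.sqrt (∑ j, θ i j ^ 2) ≤ D)
    (hconf : ∀ i, (θ i - θhat i) ⬝ᵥ (Z *ᵥ (θ i - θhat i)) ≤ γ)
    (xt : Fin d → ℝ) (hxt : xt ∈ X)
    (hPareto : ∀ x ∈ X, ∃ j : Fin m,
      θhat j ⬝ᵥ x + Real.sqrt γ * Real.sqrt (x ⬝ᵥ (Z⁻¹ *ᵥ x)) ≤
        θhat j ⬝ᵥ xt + Real.sqrt γ * Real.sqrt (xt ⬝ᵥ (Z⁻¹ *ᵥ xt))) :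
    paretoGap (X : Set (Fin d → ℝ)) (fun x i => μ i (θ i ⬝ᵥ x)) xt ≤
      2 * L * Real.sqrt γ * Real.sqrt (xt ⬝ᵥ (Z⁻¹ *ᵥ xt)) :=
  per_round_pareto_gap_bound_general d m D L γ hL X hXnorm Z hZ μ hμ_mono hμ_lip θ θhat hθ hconf xt
    hxt hPareto
end
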